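/- arXiv:1601.02637 — 2 statements merged into one kernel-verified Lean document; each statement's English description precedes it below -/
import Mathlib

section
/- Under the hypotheses of Crooks' theorem with P_fwd ≤ p_max and β > 0, with 1−δ := ∫_{w^δ}^∞ P_rev(−W) dW assumed positive, the expected number of reverse trials N_δ := 1/(1−δ) satisfies N_δ ≥ exp(β(w^δ − ΔF) + H), where H := −log(p_max/β) is the thermal order-∞ Rényi entropy of P_fwd. -/
/-!
Crooks' relation gives `P_rev(-W) = e^{-β(W-ΔF)} P_fwd(W) ≤ p_max e^{-β(W-ΔF)}`, so the tail mass
`1-δ = ∫_{w^δ}^∞ P_rev(-W) dW` is at most `(p_max/β) e^{-β(w^δ-ΔF)}`, and inverting this bound gives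
`N_δ ≥ e^{β(w^δ-ΔF)} β/p_max = e^{β(w^δ-ΔF) + H}`.
-/

open MeasureTheory Real Set

section ExpTail

theorem exp_neg_mul_sub_eq (β x d : ℝ) : exp (-(β * (x - d))) = exp (β * d) * exp (-β * x) := by
  rw [← exp_add]; ring_nf

variable {β : ℝ} (hβ : 0 < β) (c d : ℝ)
include hβ

theorem integrableOn_exp_neg_mul_sub_Ici :
    IntegrableOn (fun x => exp (-(β * (x - d)))) (Ici c) := by
  simp_rw [exp_neg_mul_sub_eq]
  exact (integrableOn_Ici_iff_integrableOn_Ioi enorm_ne_top).2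
    ((integrableOn_exp_mul_Ioi (neg_lt_zero.2 hβ) c).const_mul _)

theorem integral_exp_neg_mul_sub_Ici :
    ∫ x in Ici c, exp (-(β * (x - d))) = exp (-(β * (c - d))) / β := by
  simp_rw [integral_Ici_eq_integral_Ioi, exp_neg_mul_sub_eq, integral_const_mul,
    integral_exp_mul_Ioi (neg_lt_zero.2 hβ)]
  field_simp

end ExpTail

theorem setIntegral_Ici_rev_le_of_crooks {β ΔF pmax w : ℝ} (hβ : 0 < β) {Pfwd Prev : ℝ → ℝ}
    (hPf_le : ∀ W, Pfwd W ≤ pmax)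
    (hCrooks : ∀ W, Pfwd W = exp (β * (W - ΔF)) * Prev (-W))
    (hInt : IntegrableOn (fun W => Prev (-W)) (Ici w)) :
    ∫ W in Ici w, Prev (-W) ≤ pmax / β * exp (-(β * (w - ΔF))) := by
  have hpt : ∀ W ∈ Ici w, Prev (-W) ≤ pmax * exp (-(β * (W - ΔF))) := fun W _ => by
    rw [exp_neg, ← div_eq_mul_inv, le_div_iff₀ (exp_pos _), mul_comm, ← hCrooks]
    exact hPf_le W
  calc ∫ W in Ici w, Prev (-W)
      ≤ ∫ W in Ici w, pmax * exp (-(β * (W - ΔF))) :=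
        setIntegral_mono_on hInt ((integrableOn_exp_neg_mul_sub_Ici hβ w ΔF).const_mul pmax)
          measurableSet_Ici hpt
    _ = pmax / β * exp (-(β * (w - ΔF))) := by
        rw [integral_const_mul, integral_exp_neg_mul_sub_Ici hβ]; ring

theorem expected_trials_bound_general
    (β ΔF pmax wδ : ℝ) (hβ : 0 < β) (hpmax : 0 < pmax)
    (Pfwd Prev : ℝ → ℝ)
    (hPf_le : ∀ W, Pfwd W ≤ pmax)
    (hCrooks : ∀ W, Pfwd W = Real.exp (β * (W - ΔF)) * Prev (-W))
    (hInt : IntegrableOn (fun W => Prev (-W)) (Set.Ici wδ))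
    (oneMinusδ : ℝ)
    (hδdef : oneMinusδ = ∫ W in Set.Ici wδ, Prev (-W))
    (hδpos : 0 < oneMinusδ) :
    1 / oneMinusδ ≥ Real.exp (β * (wδ - ΔF) + (-Real.log (pmax / β))) := by
  have htail : oneMinusδ ≤ pmax / β * exp (-(β * (wδ - ΔF))) :=
    hδdef ▸ setIntegral_Ici_rev_le_of_crooks hβ hPf_le hCrooks hInt
  have hrhs : exp (β * (wδ - ΔF) + -log (pmax / β)) = 1 / (pmax / β * exp (-(β * (wδ - ΔF)))) := by
    rw [exp_add, exp_neg, exp_neg, exp_log (div_pos hpmax hβ), one_div, mul_inv, inv_inv, mul_comm]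
  rw [ge_iff_le, hrhs]
  exact one_div_le_one_div_of_le hδpos htail

/-- Theorem 1: bound on the expected number of reverse trials,
    with `H = -log (pmax/β)` the thermal order-∞ Rényi entropy. -/
theorem expected_trials_bound
    (β ΔF pmax wδ : ℝ) (hβ : 0 < β) (hpmax : 0 < pmax)
    (Pfwd Prev : ℝ → ℝ)
    (hPf_nonneg : ∀ W, 0 ≤ Pfwd W)
    (hPr_nonneg : ∀ W, 0 ≤ Prev W)
    (hPf_norm : ∫ W, Pfwd W = 1)
    (hPr_norm : ∫ W, Prev W = 1)
    (hPf_le : ∀ W, Pfwd W ≤ pmax)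
    (hCrooks : ∀ W, Pfwd W = Real.exp (β * (W - ΔF)) * Prev (-W))
    (hInt : IntegrableOn (fun W => Prev (-W)) (Set.Ici wδ))
    (oneMinusδ : ℝ)
    (hδdef : oneMinusδ = ∫ W in Set.Ici wδ, Prev (-W))
    (hδpos : 0 < oneMinusδ) :
    1 / oneMinusδ ≥ Real.exp (β * (wδ - ΔF) + (-Real.log (pmax / β))) :=
  expected_trials_bound_general β ΔF pmax wδ hβ hpmax Pfwd Prev hPf_le hCrooks hInt oneMinusδ hδdef
    hδpos
end

section
/- Under the hypotheses of Theorem 1 (Crooks' theorem, P_fwd ≤ p_max, β > 0), choosing the threshold w^δ = ⟨W⟩_fwd (the mean forward work, assumed to exist), the expected number of reverse trials satisfies N_δ ≥ (β/p_max) · e^{β(⟨W⟩_fwd − ΔF)}. In particular, if p_max < β then N_δ strictly exceeds e^{β(⟨W⟩_fwd − ΔF)}. -/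
/-!
Crooks' relation gives `P_rev(-W) = e^{-β(W - ΔF)} P_fwd(W) ≤ p_max e^{-β(W - ΔF)}`, so the
reverse probability of a work value beyond the threshold `w` is at most
`∫_w^∞ p_max e^{-β(W - ΔF)} dW = (p_max / β) e^{-β(w - ΔF)}`. Inverting this bound on `1 - δ`
gives the bound on `N_δ = 1 / (1 - δ)`.
-/

open MeasureTheory Real Set

lemma crooks_reverse_le {β ΔF pmax : ℝ} {Pfwd Prev : ℝ → ℝ}
    (hPf_le : ∀ W, Pfwd W ≤ pmax)
    (hCrooks : ∀ W, Pfwd W = exp (β * (W - ΔF)) * Prev (-W)) (W : ℝ) :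
    Prev (-W) ≤ pmax * exp (β * ΔF) * exp (-β * W) := by
  have hrev : Prev (-W) = exp (β * ΔF) * exp (-β * W) * Pfwd W := by
    rw [hCrooks W, ← mul_assoc, ← exp_add, ← exp_add,
      show β * ΔF + -β * W + β * (W - ΔF) = 0 by ring, exp_zero, one_mul]
  rw [hrev, mul_assoc pmax, mul_comm pmax]
  exact mul_le_mul_of_nonneg_left (hPf_le W) (by positivity)

lemma setIntegral_Ici_le_of_le_mul_exp {f : ℝ → ℝ} {a C β : ℝ} (hβ : 0 < β)
    (hf : IntegrableOn f (Ici a)) (hle : ∀ x ∈ Ici a, f x ≤ C * exp (-β * x)) :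
    ∫ x in Ici a, f x ≤ C * exp (-β * a) / β := by
  have hneg : -β < 0 := neg_neg_of_pos hβ
  rw [integral_Ici_eq_integral_Ioi]
  calc ∫ x in Ioi a, f x ≤ ∫ x in Ioi a, C * exp (-β * x) :=
        setIntegral_mono_on (hf.mono_set Ioi_subset_Ici_self)
          ((integrableOn_exp_mul_Ioi hneg a).const_mul C) measurableSet_Ioi
          fun x hx => hle x (Ioi_subset_Ici_self hx)
    _ = C * exp (-β * a) / β := by
        rw [integral_const_mul, integral_exp_mul_Ioi hneg, neg_div_neg_eq, mul_div_assoc]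

theorem expected_trials_bound_at_mean_work_general
    (β ΔF pmax : ℝ) (hβ : 0 < β) (hpmax : 0 < pmax)
    (Pfwd Prev : ℝ → ℝ)
    (hPf_le : ∀ W, Pfwd W ≤ pmax)
    (hCrooks : ∀ W, Pfwd W = Real.exp (β * (W - ΔF)) * Prev (-W))
    (meanW : ℝ)
    (hInt : IntegrableOn (fun W => Prev (-W)) (Set.Ici meanW))
    (oneMinusδ : ℝ)
    (hδdef : oneMinusδ = ∫ W in Set.Ici meanW, Prev (-W))
    (hδpos : 0 < oneMinusδ) :
    1 / oneMinusδ ≥ (β / pmax) * Real.exp (β * (meanW - ΔF)) ∧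
      (pmax < β → 1 / oneMinusδ > Real.exp (β * (meanW - ΔF))) := by
  have hδle : oneMinusδ ≤ pmax * exp (β * ΔF) * exp (-β * meanW) / β :=
    hδdef ▸ setIntegral_Ici_le_of_le_mul_exp hβ hInt
      fun W _ => crooks_reverse_le hPf_le hCrooks W
  have hinv : 1 / (pmax * exp (β * ΔF) * exp (-β * meanW) / β) =
      (β / pmax) * exp (β * (meanW - ΔF)) := by
    rw [mul_sub, exp_sub, neg_mul, exp_neg]
    field_simp
  have hbound : 1 / oneMinusδ ≥ (β / pmax) * exp (β * (meanW - ΔF)) :=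
    hinv ▸ one_div_le_one_div_of_le hδpos hδle
  refine ⟨hbound, fun hlt => lt_of_lt_of_le ?_ hbound⟩
  exact lt_mul_left (exp_pos _) ((one_lt_div hpmax).mpr hlt)

/-- Theorem 1 with the threshold chosen as the mean forward work:
    the bound tightens the rough estimate e^{β(⟨W⟩ - ΔF)} when pmax < β. -/
theorem expected_trials_bound_at_mean_work
    (β ΔF pmax : ℝ) (hβ : 0 < β) (hpmax : 0 < pmax)
    (Pfwd Prev : ℝ → ℝ)
    (hPf_nonneg : ∀ W, 0 ≤ Pfwd W)
    (hPr_nonneg : ∀ W, 0 ≤ Prev W)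
    (hPf_norm : ∫ W, Pfwd W = 1)
    (hPr_norm : ∫ W, Prev W = 1)
    (hPf_le : ∀ W, Pfwd W ≤ pmax)
    (hCrooks : ∀ W, Pfwd W = Real.exp (β * (W - ΔF)) * Prev (-W))
    (hIntMean : Integrable (fun W => W * Pfwd W))
    (meanW : ℝ) (hmean : meanW = ∫ W, W * Pfwd W)
    (hInt : IntegrableOn (fun W => Prev (-W)) (Set.Ici meanW))
    (oneMinusδ : ℝ)
    (hδdef : oneMinusδ = ∫ W in Set.Ici meanW, Prev (-W))
    (hδpos : 0 < oneMinusδ) :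
    1 / oneMinusδ ≥ (β / pmax) * Real.exp (β * (meanW - ΔF)) ∧
      (pmax < β → 1 / oneMinusδ > Real.exp (β * (meanW - ΔF))) :=
  expected_trials_bound_at_mean_work_general β ΔF pmax hβ hpmax Pfwd Prev hPf_le hCrooks meanW hInt
    oneMinusδ hδdef hδpos
end
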